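/- Let N ≥ 3 be a fixed integer, and for each ε ∈ (0,1/3] let Y^{(ε)} = (Y^{(ε)}_k, k ∈ ℤ) be a strictly stationary Markov chain satisfying Condition S(N,ε), with m-step transition probabilities p^{(m)}_{N,ε,i,j} := P(Y^{(ε)}_m = j | Y^{(ε)}_0 = i). Then: for every m ≥ 1, p^{(m)}_{N,ε,0,0} → 1 as ε → 0+; for every m ∈ {1,...,N−1}, p^{(m)}_{N,ε,0,m} ~ ε^{2m} as ε → 0+; p^{(N)}_{N,ε,0,N} ~ ε^{2N−1} as ε → 0+; if N ≥ j > i ≥ 0 then p^{(j−i)}_{N,ε,j,i} → 1 as ε → 0+; and if 1 ≤ j ≤ N and m ≥ j then p^{(m)}_{N,ε,j,0} → 1 as ε → 0+. -/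

import Mathlib

open MeasureTheory ProbabilityTheory Filter Set
open scoped ENNReal Topology

noncomputable section

variable {Ω : Type*}

/-- The σ-field generated by the random variables `X k`, `k ∈ S`. -/
def sigmaOf [MeasurableSpace Ω] (X : ℤ → Ω → ℝ) (S : Set ℤ) : MeasurableSpace Ω :=
  ⨆ k ∈ S, MeasurableSpace.comap (X k) inferInstance

/-- A sequence indexed by `ℤ` is strictly stationary if its law (as a measure on `ℤ → ℝ`)
is invariant under the index shift. -/
def StrictlyStationary [MeasurableSpace Ω] (P : Measure Ω) (X : ℤ → Ω → ℝ) : Prop :=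
  ∀ n : ℤ, Measure.map (fun ω => fun k : ℤ => X (k + n) ω) P
    = Measure.map (fun ω => fun k : ℤ => X k ω) P

/-- Markov chain: for each `k`, the past `σ(X_j, j ≤ k)` and the future `σ(X_j, j ≥ k)`
are conditionally independent given the present `σ(X_k)`. -/
def IsMarkovChain [MeasurableSpace Ω] (P : Measure Ω) (X : ℤ → Ω → ℝ) : Prop :=
  (∀ k, Measurable (X k)) ∧
  ∀ k : ℤ, ∀ A B : Set Ω, MeasurableSet[sigmaOf X (Set.Iic k)] A →
    MeasurableSet[sigmaOf X (Set.Ici k)] B →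
    (fun ω => (P[A.indicator (fun _ => (1:ℝ)) | sigmaOf X {k}]) ω *
              (P[B.indicator (fun _ => (1:ℝ)) | sigmaOf X {k}]) ω)
      =ᵐ[P] P[(A ∩ B).indicator (fun _ => (1:ℝ)) | sigmaOf X {k}]

/-- Covariance of two real random variables. -/
def covP [MeasurableSpace Ω] (P : Measure Ω) (f g : Ω → ℝ) : ℝ :=
  ∫ ω, (f ω - ∫ x, f x ∂P) * (g ω - ∫ x, g x ∂P) ∂P

/-- Correlation coefficient of two real random variables (with the convention 0/0 = 0). -/
def corrP [MeasurableSpace Ω] (P : Measure Ω) (f g : Ω → ℝ) : ℝ :=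
  covP P f g / (Real.sqrt (covP P f f) * Real.sqrt (covP P g g))

/-- Maximal correlation coefficient ρ(𝒜,ℬ): the supremum of |Corr(f,g)| over square-integrable
`f` measurable w.r.t. `mA` and `g` measurable w.r.t. `mB`. -/
def maxCorr (mA mB : MeasurableSpace Ω) [MeasurableSpace Ω] (P : Measure Ω) : ℝ :=
  sSup {r : ℝ | ∃ f g : Ω → ℝ, Measurable[mA] f ∧ Measurable[mB] g ∧
    MemLp f 2 P ∧ MemLp g 2 P ∧ r = |corrP P f g|}

/-- η(A,B) = P(A∩B)/(P(A)P(B)) (with the convention 0/0 = 0). -/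
def etaP [MeasurableSpace Ω] (P : Measure Ω) (A B : Set Ω) : ℝ :=
  (P (A ∩ B)).toReal / ((P A).toReal * (P B).toReal)

/-- ψ dependence coefficient, with values in `[0,∞]`. -/
def psiDep (mA mB : MeasurableSpace Ω) [MeasurableSpace Ω] (P : Measure Ω) : ℝ≥0∞ :=
  ⨆ (A : Set Ω) (B : Set Ω) (_ : MeasurableSet[mA] A) (_ : MeasurableSet[mB] B)
    (_ : 0 < P A) (_ : 0 < P B), ENNReal.ofReal |etaP P A B - 1|

/-- A finite partition of `Ω` into `m`-measurable events of positive probability. -/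
def IsFinPartition (m : MeasurableSpace Ω) [MeasurableSpace Ω] (P : Measure Ω)
    {n : ℕ} (A : Fin n → Set Ω) : Prop :=
  (∀ i, MeasurableSet[m] (A i)) ∧ (∀ i, 0 < P (A i)) ∧
  (Pairwise fun i j => Disjoint (A i) (A j)) ∧ (⋃ i, A i) = Set.univ

/-- Coefficient of information I(𝒜,ℬ), valued in `[0,∞]`
(note `Real.log 0 = 0`, so `0 log 0 = 0` automatically). -/
def infoCoef (mA mB : MeasurableSpace Ω) [MeasurableSpace Ω] (P : Measure Ω) : ℝ≥0∞ :=
  ⨆ (nI : ℕ) (nJ : ℕ) (A : Fin nI → Set Ω) (B : Fin nJ → Set Ω)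
    (_ : IsFinPartition mA P A) (_ : IsFinPartition mB P B),
    ENNReal.ofReal (∑ i, ∑ j,
      (P (A i)).toReal * (P (B j)).toReal *
        (etaP P (A i) (B j) * Real.log (etaP P (A i) (B j))))

/-- β dependence coefficient (absolute regularity coefficient). -/
def betaDep (mA mB : MeasurableSpace Ω) [MeasurableSpace Ω] (P : Measure Ω) : ℝ :=
  sSup {r : ℝ | ∃ (nI nJ : ℕ) (A : Fin nI → Set Ω) (B : Fin nJ → Set Ω),
    IsFinPartition mA P A ∧ IsFinPartition mB P B ∧
    r = (1/2) * ∑ i, ∑ j,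
      |(P (A i ∩ B j)).toReal - (P (A i)).toReal * (P (B j)).toReal|}

/-- ρ(X,n) -/
def rhoMix [MeasurableSpace Ω] (P : Measure Ω) (X : ℤ → Ω → ℝ) (n : ℕ) : ℝ :=
  maxCorr (sigmaOf X (Set.Iic 0)) (sigmaOf X (Set.Ici (n:ℤ))) P

/-- β(X,n) -/
def betaMix [MeasurableSpace Ω] (P : Measure Ω) (X : ℤ → Ω → ℝ) (n : ℕ) : ℝ :=
  betaDep (sigmaOf X (Set.Iic 0)) (sigmaOf X (Set.Ici (n:ℤ))) P

/-- I(X,n) -/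
def infoMix [MeasurableSpace Ω] (P : Measure Ω) (X : ℤ → Ω → ℝ) (n : ℕ) : ℝ≥0∞ :=
  infoCoef (sigmaOf X (Set.Iic 0)) (sigmaOf X (Set.Ici (n:ℤ))) P

/-- ψ(X,n) -/
def psiMix [MeasurableSpace Ω] (P : Measure Ω) (X : ℤ → Ω → ℝ) (n : ℕ) : ℝ≥0∞ :=
  psiDep (sigmaOf X (Set.Iic 0)) (sigmaOf X (Set.Ici (n:ℤ))) P

/-- Interlaced maximal correlation coefficient ρ*(X,n): the supremum of
ρ(σ(X_k, k ∈ S), σ(X_k, k ∈ T)) over nonempty disjoint S, T ⊂ ℤ with dist(S,T) ≥ n. -/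
def rhoStar [MeasurableSpace Ω] (P : Measure Ω) (X : ℤ → Ω → ℝ) (n : ℕ) : ℝ :=
  sSup {r : ℝ | ∃ S T : Set ℤ, S.Nonempty ∧ T.Nonempty ∧ Disjoint S T ∧
    (∀ s ∈ S, ∀ t ∈ T, (n:ℤ) ≤ |s - t|) ∧ r = maxCorr (sigmaOf X S) (sigmaOf X T) P}

/-- Condition S(N,ε) of Definition 2.1: a strictly stationary Markov chain with state space
`{0,1,...,N}` (as reals) whose joint law of `(Y_0, Y_1)` is as prescribed. -/
def ConditionS [MeasurableSpace Ω] (P : Measure Ω) (N : ℕ) (ε : ℝ) (Y : ℤ → Ω → ℝ) : Prop :=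
  StrictlyStationary P Y ∧ IsMarkovChain P Y ∧
  (∀ᵐ ω ∂P, ∃ i : ℕ, i ≤ N ∧ Y 0 ω = (i:ℝ)) ∧
  (P {ω | Y 0 ω = 0 ∧ Y 1 ω = 0}).toReal
      = 1 - 2 * (ε^(2*N-1) + ∑ u ∈ Finset.Icc 1 (N-1), ε^(2*u)) ∧
  (∀ m : ℕ, 1 ≤ m → m ≤ N - 1 →
    (P {ω | Y 0 ω = (m:ℝ) - 1 ∧ Y 1 ω = (m:ℝ)}).toReal = ε^(2*m) ∧
    (P {ω | Y 0 ω = (m:ℝ) ∧ Y 1 ω = (m:ℝ) - 1}).toReal = ε^(2*m)) ∧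
  (P {ω | Y 0 ω = (N:ℝ) - 1 ∧ Y 1 ω = (N:ℝ)}).toReal = ε^(2*N-1) ∧
  (P {ω | Y 0 ω = (N:ℝ) ∧ Y 1 ω = (N:ℝ) - 1}).toReal = ε^(2*N-1) ∧
  (∀ i j : ℕ, i ≤ N → j ≤ N → ((i = j ∧ 1 ≤ i) ∨ 2 ≤ |(i:ℤ) - (j:ℤ)|) →
    P {ω | Y 0 ω = (i:ℝ) ∧ Y 1 ω = (j:ℝ)} = 0)

/-- `m`-step transition probability `P(Y_m = j | Y_0 = i)` (with the convention 0/0 = 0). -/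
def transProb [MeasurableSpace Ω] (P : Measure Ω) (Y : ℤ → Ω → ℝ) (m : ℕ) (i j : ℕ) : ℝ :=
  (P {ω | Y 0 ω = (i:ℝ) ∧ Y (m:ℤ) ω = (j:ℝ)}).toReal / (P {ω | Y 0 ω = (i:ℝ)}).toReal

/-!
Stationarity and the Markov property give the Chapman–Kolmogorov inequality
`p⁽ᵐ⁾(i,k) p⁽ⁿ⁾(k,j) ≤ p⁽ᵐ⁺ⁿ⁾(i,j)`, with equality when the chain is forced to be at `k` at
time `m`. Under Condition S the chain moves by at most one unit per step, so climbing from `0` to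
`m` in `m` steps, or descending from `j` to `i` in `j - i` steps, forces every intermediate state,
and these probabilities are products of one-step ones. A state `1 ≤ k < N` has mass
`ε^e(k) + ε^e(k+1)` with `e = condSExponent N` increasing, so a step down has probability `→ 1` and the step up
from `k` has probability `~ ε^(e(k+1) - e(k))`; the product of the steps up telescopes to
`ε^e(m)`. Since `P(Y₀ = 0) → 1`, the bound `P(Y₀ = 0, Y_m = 0) ≥ 2 P(Y₀ = 0) - 1` gives
`p⁽ᵐ⁾(0,0) → 1`, and the last claim follows from the inequality through the path that descends
from `j` to `0` and then stays at `0`.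
-/

section MarkovProperty

variable [MeasurableSpace Ω] {P : Measure Ω} {Y : ℤ → Ω → ℝ}

lemma measurableSet_sigmaOf_eq {S : Set ℤ} {k : ℤ} (hk : k ∈ S) (c : ℝ) :
    MeasurableSet[sigmaOf Y S] {ω | Y k ω = c} :=
  le_iSup₂ (f := fun j (_ : j ∈ S) => MeasurableSpace.comap (Y j) inferInstance) k hk _
    ⟨{c}, measurableSet_singleton c, rfl⟩

lemma sigmaOf_le (hY : ∀ k, Measurable (Y k)) (S : Set ℤ) : sigmaOf Y S ≤ ‹_› :=
  iSup₂_le fun k _ => (hY k).comap_le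

lemma sigmaOf_singleton (k : ℤ) :
    sigmaOf Y {k} = MeasurableSpace.comap (Y k) inferInstance := by
  simp [sigmaOf]

lemma setIntegral_eq_mul_of_measurable_sigmaOf_singleton {k : ℤ} {c : ℝ} {g : Ω → ℝ}
    (hg : Measurable[sigmaOf Y {k}] g) {ω₀ : Ω} (hω₀ : Y k ω₀ = c)
    (hC : MeasurableSet {ω | Y k ω = c}) :
    ∫ ω in {ω | Y k ω = c}, g ω ∂P = g ω₀ * P.real {ω | Y k ω = c} := by
  rw [sigmaOf_singleton] at hg
  have hconst : ∀ ω ∈ {ω | Y k ω = c}, g ω = g ω₀ := fun ω hω =>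
    hg.factorsThrough (hω.trans hω₀.symm)
  rw [setIntegral_congr_fun hC hconst, setIntegral_const, smul_eq_mul, mul_comm]

/-- Conditional independence of past and future given the atom `{Y k = c}` of the present,
in division-free form. -/
lemma IsMarkovChain.measure_inter_inter_mul [IsFiniteMeasure P] (hM : IsMarkovChain P Y)
    {k : ℤ} {A B : Set Ω} (hA : MeasurableSet[sigmaOf Y (Iic k)] A)
    (hB : MeasurableSet[sigmaOf Y (Ici k)] B) (c : ℝ) :
    P.real (A ∩ B ∩ {ω | Y k ω = c}) * P.real {ω | Y k ω = c}
      = P.real (A ∩ {ω | Y k ω = c}) * P.real (B ∩ {ω | Y k ω = c}) := by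
  set C := {ω | Y k ω = c}
  rcases C.eq_empty_or_nonempty with hC | ⟨ω₀, hω₀⟩
  · simp [hC]
  have hle := sigmaOf_le hM.1
  have hCk : MeasurableSet[sigmaOf Y {k}] C := measurableSet_sigmaOf_eq (mem_singleton k) c
  have hC : MeasurableSet C := hle {k} C hCk
  have hA' := hle (Iic k) A hA
  have hB' := hle (Ici k) B hB
  have hint : ∀ D, MeasurableSet D →
      ∫ ω in C, (P[D.indicator (fun _ => (1:ℝ)) | sigmaOf Y {k}]) ω ∂P = P.real (D ∩ C) := by
    intro D hD
    rw [setIntegral_condExp (hle {k}) ((integrable_const _).indicator hD) hCk,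
      integral_indicator_const _ hD, measureReal_restrict_apply hD, smul_eq_mul, mul_one]
  set a := P[A.indicator (fun _ => (1:ℝ)) | sigmaOf Y {k}]
  set b := P[B.indicator (fun _ => (1:ℝ)) | sigmaOf Y {k}]
  have ha : Measurable[sigmaOf Y {k}] a := stronglyMeasurable_condExp.measurable
  have hb : Measurable[sigmaOf Y {k}] b := stronglyMeasurable_condExp.measurable
  have hAB : P.real (A ∩ B ∩ C) = a ω₀ * b ω₀ * P.real C := by
    rw [← hint _ (hA'.inter hB'),
      ← setIntegral_congr_ae hC ((hM.2 k A B hA hB).mono fun ω hω _ => hω)]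
    exact setIntegral_eq_mul_of_measurable_sigmaOf_singleton (ha.mul hb) hω₀ hC
  rw [hAB, ← hint A hA', ← hint B hB',
    setIntegral_eq_mul_of_measurable_sigmaOf_singleton ha hω₀ hC,
    setIntegral_eq_mul_of_measurable_sigmaOf_singleton hb hω₀ hC]
  ring

end MarkovProperty

namespace StrictlyStationary

variable [MeasurableSpace Ω] {P : Measure Ω} {Y : ℤ → Ω → ℝ}

lemma measure_preimage_shift (hS : StrictlyStationary P Y) (hY : ∀ k, Measurable (Y k)) (n : ℤ)
    {T : Set (ℤ → ℝ)} (hT : MeasurableSet T) :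
    P ((fun ω k => Y (k + n) ω) ⁻¹' T) = P ((fun ω k => Y k ω) ⁻¹' T) := by
  rw [← Measure.map_apply (measurable_pi_lambda _ fun k => hY _) hT,
    ← Measure.map_apply (measurable_pi_lambda _ fun k => hY _) hT, hS n]

lemma measureReal_eq_shift (hS : StrictlyStationary P Y) (hY : ∀ k, Measurable (Y k)) (n : ℤ)
    (a : ℝ) : P.real {ω | Y n ω = a} = P.real {ω | Y 0 ω = a} := by
  have hT : MeasurableSet {f : ℤ → ℝ | f 0 = a} :=
    measurableSet_eq_fun (measurable_pi_apply 0) measurable_const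
  simpa [measureReal_def, preimage] using congrArg ENNReal.toReal
    (hS.measure_preimage_shift hY n hT)

lemma measureReal_pair_eq_shift (hS : StrictlyStationary P Y) (hY : ∀ k, Measurable (Y k))
    (n m : ℤ) (a b : ℝ) :
    P.real {ω | Y n ω = a ∧ Y (m + n) ω = b} = P.real {ω | Y 0 ω = a ∧ Y m ω = b} := by
  have hT : MeasurableSet {f : ℤ → ℝ | f 0 = a ∧ f m = b} :=
    (measurableSet_eq_fun (measurable_pi_apply 0) measurable_const).inter
      (measurableSet_eq_fun (measurable_pi_apply m) measurable_const)
  simpa [measureReal_def, preimage] using congrArg ENNReal.toReal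
    (hS.measure_preimage_shift hY n hT)

lemma ae_shift (hS : StrictlyStationary P Y) (hY : ∀ k, Measurable (Y k)) (n : ℤ)
    {T : Set (ℤ → ℝ)} (hT : MeasurableSet T) (h : ∀ᵐ ω ∂P, (fun k => Y k ω) ∈ T) :
    ∀ᵐ ω ∂P, (fun k => Y (k + n) ω) ∈ T := by
  rw [ae_iff] at h ⊢
  exact (hS.measure_preimage_shift hY n hT.compl).trans h

end StrictlyStationary

section TransProb

variable [MeasurableSpace Ω] {P : Measure Ω} [IsFiniteMeasure P] {Y : ℤ → Ω → ℝ}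

lemma transProb_le_one (m i j : ℕ) : transProb P Y m i j ≤ 1 :=
  div_le_one_of_le₀ (ENNReal.toReal_mono (measure_ne_top _ _) (measure_mono fun _ h => h.1))
    ENNReal.toReal_nonneg

lemma measureReal_eq_sum_measureReal_pair (hY : ∀ k, Measurable (Y k)) {N : ℕ}
    (h : ∀ᵐ ω ∂P, ∃ j ≤ N, Y 1 ω = j) (x : ℝ) :
    P.real {ω | Y 0 ω = x}
      = ∑ j ∈ Finset.range (N + 1), P.real {ω | Y 0 ω = x ∧ Y 1 ω = j} := by
  rw [← measureReal_biUnion_finset]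
  · refine measureReal_congr (eventuallyEq_set.2 ?_)
    filter_upwards [h] with ω ⟨j, hj, hω⟩
    simp only [mem_iUnion, Finset.mem_range, mem_ofPred_eq]
    exact ⟨fun h₀ => ⟨j, by omega, h₀, hω⟩, fun ⟨_, _, h₀, _⟩ => h₀⟩
  · intro i _ j _ hij
    exact disjoint_left.2 fun ω h₁ h₂ => hij (by exact_mod_cast h₁.2.symm.trans h₂.2)
  · exact fun j _ => (measurableSet_eq_fun (hY 0) measurable_const).inter
      (measurableSet_eq_fun (hY 1) measurable_const)

lemma measureReal_inter_mul_measureReal (hS : StrictlyStationary P Y) (hM : IsMarkovChain P Y)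
    (m n : ℕ) (a b c : ℝ) :
    P.real {ω | Y 0 ω = a ∧ Y m ω = b ∧ Y ↑(m + n) ω = c} * P.real {ω | Y 0 ω = b}
      = P.real {ω | Y 0 ω = a ∧ Y m ω = b} * P.real {ω | Y 0 ω = b ∧ Y n ω = c} := by
  have h₀ : MeasurableSet[sigmaOf Y (Iic m)] {ω | Y 0 ω = a} :=
    measurableSet_sigmaOf_eq (by simp) a
  have hₘ : MeasurableSet[sigmaOf Y (Iic m)] {ω | Y m ω = b} :=
    measurableSet_sigmaOf_eq (by simp) b
  have hA : MeasurableSet[sigmaOf Y (Iic m)] {ω | Y 0 ω = a ∧ Y m ω = b} := h₀.inter hₘ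
  have hB : MeasurableSet[sigmaOf Y (Ici m)] {ω | Y ↑(m + n) ω = c} :=
    measurableSet_sigmaOf_eq (by simp) c
  have h := hM.measure_inter_inter_mul hA hB b
  have e₁ : {ω | Y 0 ω = a ∧ Y m ω = b} ∩ {ω | Y ↑(m + n) ω = c} ∩ {ω | Y m ω = b}
      = {ω | Y 0 ω = a ∧ Y m ω = b ∧ Y ↑(m + n) ω = c} := by
    ext; simp only [mem_inter_iff, mem_ofPred_eq]; tauto
  have e₂ : {ω | Y 0 ω = a ∧ Y m ω = b} ∩ {ω | Y m ω = b} = {ω | Y 0 ω = a ∧ Y m ω = b} :=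
    inter_eq_left.2 fun _ h => h.2
  have e₃ : {ω | Y ↑(m + n) ω = c} ∩ {ω | Y m ω = b} = {ω | Y m ω = b ∧ Y (n + m) ω = c} := by
    ext; simp only [mem_inter_iff, mem_ofPred_eq, Nat.cast_add, add_comm (n : ℤ)]; tauto
  rwa [e₁, e₂, e₃, hS.measureReal_eq_shift hM.1, hS.measureReal_pair_eq_shift hM.1] at h

lemma transProb_mul_transProb (hS : StrictlyStationary P Y) (hM : IsMarkovChain P Y)
    (m n i k j : ℕ) :
    transProb P Y m i k * transProb P Y n k j
      = P.real {ω | Y 0 ω = i ∧ Y m ω = k ∧ Y ↑(m + n) ω = j} / P.real {ω | Y 0 ω = i} := by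
  simp only [transProb, ← measureReal_def]
  have hshift := hS.measureReal_eq_shift hM.1 m k
  rcases eq_or_ne (P.real {ω | Y 0 ω = k}) 0 with hk | hk
  · have hik : P.real {ω | Y 0 ω = i ∧ Y m ω = k} = 0 :=
      le_antisymm ((measureReal_mono fun _ h => h.2).trans (hshift.trans hk).le) measureReal_nonneg
    have hikj : P.real {ω | Y 0 ω = i ∧ Y m ω = k ∧ Y ↑(m + n) ω = j} = 0 :=
      le_antisymm ((measureReal_mono fun _ h => h.2.1).trans (hshift.trans hk).le)
        measureReal_nonneg
    rw [hik, hikj]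
    simp
  · rw [div_mul_div_comm, ← measureReal_inter_mul_measureReal hS hM]
    field_simp

lemma transProb_mul_transProb_le (hS : StrictlyStationary P Y) (hM : IsMarkovChain P Y)
    (m n i k j : ℕ) :
    transProb P Y m i k * transProb P Y n k j ≤ transProb P Y (m + n) i j := by
  rw [transProb_mul_transProb hS hM]
  exact div_le_div_of_nonneg_right (measureReal_mono fun _ h => ⟨h.1, h.2.2⟩) measureReal_nonneg

lemma transProb_add_eq_mul (hS : StrictlyStationary P Y) (hM : IsMarkovChain P Y)
    {m n i k j : ℕ} (h : ∀ᵐ ω ∂P, Y 0 ω = i → Y ↑(m + n) ω = j → Y m ω = k) :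
    transProb P Y (m + n) i j = transProb P Y m i k * transProb P Y n k j := by
  rw [transProb_mul_transProb hS hM, transProb, ← measureReal_def, ← measureReal_def]
  congr 1
  refine measureReal_congr (eventuallyEq_set.2 ?_)
  filter_upwards [h] with ω hω
  exact ⟨fun h' => ⟨h'.1, hω h'.1 h'.2, h'.2⟩, fun h' => ⟨h'.1, h'.2.2⟩⟩

end TransProb

lemma two_sub_inv_le_transProb_self [MeasurableSpace Ω] {P : Measure Ω} [IsProbabilityMeasure P]
    {Y : ℤ → Ω → ℝ} (hS : StrictlyStationary P Y) (hY : ∀ k, Measurable (Y k))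
    (m i : ℕ) (hi : 0 < P.real {ω | Y 0 ω = i}) :
    2 - 1 / P.real {ω | Y 0 ω = i} ≤ transProb P Y m i i := by
  have hshift := hS.measureReal_eq_shift hY m i
  have hunion : P.real ({ω | Y 0 ω = i} ∪ {ω | Y m ω = i}) + P.real {ω | Y 0 ω = i ∧ Y m ω = i}
      = P.real {ω | Y 0 ω = i} + P.real {ω | Y m ω = i} :=
    measureReal_union_add_inter (measurableSet_eq_fun (hY m) measurable_const)
  have hle : P.real ({ω | Y 0 ω = i} ∪ {ω | Y m ω = i}) ≤ 1 := measureReal_le_one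
  rw [transProb, ← measureReal_def, ← measureReal_def, le_div_iff₀ hi]
  field_simp
  linarith

section NearestNeighbour

variable {f : ℤ → ℝ}

lemma abs_sub_le_of_abs_succ_sub_le_one (hf : ∀ k, |f (k + 1) - f k| ≤ 1) (k : ℤ) (n : ℕ) :
    |f (k + n) - f k| ≤ n := by
  induction n with
  | zero => simp
  | succ n ih =>
    calc |f (k + ↑(n + 1)) - f k| = |(f (k + n + 1) - f (k + n)) + (f (k + n) - f k)| := by
          push_cast; ring_nf
      _ ≤ 1 + n := (abs_add_le _ _).trans (add_le_add (hf _) ih)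
      _ = ↑(n + 1) := by push_cast; ring

lemma eq_add_of_abs_succ_sub_le_one (hf : ∀ k, |f (k + 1) - f k| ≤ 1) {n : ℕ}
    (h : f ↑(n + 1) = f 0 + (n + 1)) : f n = f 0 + n := by
  have h₁ := abs_le.1 (abs_sub_le_of_abs_succ_sub_le_one hf 0 n)
  have h₂ := abs_le.1 (hf n)
  push_cast at h
  simp only [zero_add] at h₁
  linarith [h₁.2, h₂.1]

lemma eq_sub_of_abs_succ_sub_le_one (hf : ∀ k, |f (k + 1) - f k| ≤ 1) {n : ℕ}
    (h : f ↑(n + 1) = f 0 - (n + 1)) : f n = f 0 - n := by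
  have := eq_add_of_abs_succ_sub_le_one (f := fun k => -f k)
    (fun k => by simpa [abs_sub_comm, neg_add_eq_sub] using hf k) (n := n) (by rw [h]; ring)
  linarith

end NearestNeighbour

/-- Condition S(N,ε) puts the mass `ε ^ condSExponent N m` on each of the two one-step
transitions `m - 1 → m` and `m → m - 1`. -/
def condSExponent (N m : ℕ) : ℕ :=
  if m < N then 2 * m else 2 * N - 1

namespace ConditionS

variable [MeasurableSpace Ω] {P : Measure Ω} {Y : ℤ → Ω → ℝ} {N : ℕ} {ε : ℝ}

lemma measurable (hC : ConditionS P N ε Y) (k : ℤ) : Measurable (Y k) :=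
  hC.2.1.1 k

lemma measureReal_succ_pair (hC : ConditionS P N ε Y) {m : ℕ} (hm : m < N) :
    P.real {ω | Y 0 ω = m ∧ Y 1 ω = ↑(m + 1)} = ε ^ condSExponent N (m + 1) ∧
      P.real {ω | Y 0 ω = ↑(m + 1) ∧ Y 1 ω = m} = ε ^ condSExponent N (m + 1) := by
  obtain ⟨-, -, -, -, hinner, hup, hdown, -⟩ := hC
  rcases (Nat.succ_le_of_lt hm).lt_or_eq with h | rfl
  · simpa [condSExponent, h, measureReal_def] using hinner (m + 1) (by omega) (by omega)
  · simpa [condSExponent, measureReal_def] using And.intro hup hdown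

lemma measureReal_zero_zero (hC : ConditionS P N ε Y) :
    P.real {ω | Y 0 ω = 0 ∧ Y 1 ω = 0}
      = 1 - 2 * (ε ^ (2 * N - 1) + ∑ u ∈ Finset.Icc 1 (N - 1), ε ^ (2 * u)) :=
  hC.2.2.2.1

lemma measure_pair_eq_zero (hC : ConditionS P N ε Y) {i j : ℕ} (hi : i ≤ N) (hj : j ≤ N)
    (hij : (i = j ∧ 1 ≤ i) ∨ i + 2 ≤ j ∨ j + 2 ≤ i) :
    P {ω | Y 0 ω = i ∧ Y 1 ω = j} = 0 :=
  hC.2.2.2.2.2.2.2 i j hi hj (hij.imp_right fun h => le_abs.2 (by omega))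

lemma ae_exists_eq (hC : ConditionS P N ε Y) (k : ℤ) : ∀ᵐ ω ∂P, ∃ i ≤ N, Y k ω = i := by
  have hT : MeasurableSet {f : ℤ → ℝ | ∃ i ≤ N, f 0 = i} := by measurability
  simpa using hC.1.ae_shift hC.measurable k hT hC.2.2.1

lemma ae_abs_sub_le_one (hC : ConditionS P N ε Y) :
    ∀ᵐ ω ∂P, ∀ k : ℤ, |Y (k + 1) ω - Y k ω| ≤ 1 := by
  have hpair : ∀ i j : ℕ, ∀ᵐ ω ∂P, Y 0 ω = i → Y 1 ω = j → i ≤ N → j ≤ N →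
      |(j : ℝ) - i| ≤ 1 := by
    intro i j
    by_cases h : i ≤ N ∧ j ≤ N ∧ (i + 2 ≤ j ∨ j + 2 ≤ i)
    · filter_upwards [measure_eq_zero_iff_ae_notMem.1
        (hC.measure_pair_eq_zero h.1 h.2.1 (Or.inr h.2.2))] with ω hω h₀ h₁
      exact absurd ⟨h₀, h₁⟩ hω
    · refine Eventually.of_forall fun ω _ _ hi hj => ?_
      have hji : (j : ℝ) ≤ i + 1 := by exact_mod_cast (by omega : j ≤ i + 1)
      have hij : (i : ℝ) ≤ j + 1 := by exact_mod_cast (by omega : i ≤ j + 1)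
      exact abs_le.2 ⟨by linarith, by linarith⟩
  have h₀ : ∀ᵐ ω ∂P, |Y 1 ω - Y 0 ω| ≤ 1 := by
    filter_upwards [hC.ae_exists_eq 0, hC.ae_exists_eq 1,
      ae_all_iff.2 fun i => ae_all_iff.2 (hpair i)] with ω ⟨i, hi, h₀⟩ ⟨j, hj, h₁⟩ hω
    rw [h₀, h₁]
    exact hω i j h₀ h₁ hi hj
  have hT : MeasurableSet {f : ℤ → ℝ | |f 1 - f 0| ≤ 1} :=
    measurableSet_le (by fun_prop) measurable_const
  refine ae_all_iff.2 fun k => ?_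
  simpa [add_comm] using hC.1.ae_shift hC.measurable k hT h₀

lemma measureReal_pair_eq_zero (hC : ConditionS P N ε Y) {i j : ℕ} (hi : i ≤ N) (hj : j ≤ N)
    (hij : (i = j ∧ 1 ≤ i) ∨ i + 2 ≤ j ∨ j + 2 ≤ i) :
    P.real {ω | Y 0 ω = i ∧ Y 1 ω = j} = 0 := by
  rw [measureReal_def, hC.measure_pair_eq_zero hi hj hij, ENNReal.toReal_zero]

lemma transProb_one_zero_one (hC : ConditionS P N ε Y) (hN : 1 ≤ N) :
    transProb P Y 1 0 1 = ε ^ condSExponent N 1 / P.real {ω | Y 0 ω = 0} := by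
  simpa [transProb, ← measureReal_def] using congrArg (· / P.real {ω | Y 0 ω = 0})
    (hC.measureReal_succ_pair hN).1

variable [IsFiniteMeasure P]

lemma measureReal_zero (hC : ConditionS P N ε Y) (hN : 1 ≤ N) :
    P.real {ω | Y 0 ω = 0}
      = 1 - 2 * (ε ^ (2 * N - 1) + ∑ u ∈ Finset.Icc 1 (N - 1), ε ^ (2 * u))
        + ε ^ condSExponent N 1 := by
  rw [measureReal_eq_sum_measureReal_pair hC.measurable (hC.ae_exists_eq 1),
    Finset.sum_eq_add 0 1 zero_ne_one, ← hC.measureReal_zero_zero]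
  · simpa using (hC.measureReal_succ_pair hN).1
  · intro j hj hj'
    have := Finset.mem_range.1 hj
    simpa using hC.measureReal_pair_eq_zero (i := 0) (j := j) (by omega) (by omega) (by omega)
  · exact fun h => absurd (Finset.mem_range.2 (by omega)) h
  · exact fun h => absurd (Finset.mem_range.2 (by omega)) h

lemma measureReal_of_pos_of_lt (hC : ConditionS P N ε Y) {k : ℕ} (hk₀ : 1 ≤ k) (hkN : k < N) :
    P.real {ω | Y 0 ω = k} = ε ^ condSExponent N k + ε ^ condSExponent N (k + 1) := by
  obtain ⟨k, rfl⟩ := Nat.exists_eq_add_of_le' hk₀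
  rw [measureReal_eq_sum_measureReal_pair hC.measurable (hC.ae_exists_eq 1),
    Finset.sum_eq_add k (k + 2) (by omega), (hC.measureReal_succ_pair (m := k) (by omega)).2,
    (hC.measureReal_succ_pair hkN).1]
  · intro j hj hj'
    have := Finset.mem_range.1 hj
    exact hC.measureReal_pair_eq_zero (by omega) (by omega) (by omega)
  · exact fun h => absurd (Finset.mem_range.2 (by omega)) h
  · exact fun h => absurd (Finset.mem_range.2 (by omega)) h

lemma measureReal_last (hC : ConditionS P N ε Y) (hN : 1 ≤ N) :
    P.real {ω | Y 0 ω = N} = ε ^ condSExponent N N := by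
  obtain ⟨n, rfl⟩ := Nat.exists_eq_add_of_le' hN
  rw [measureReal_eq_sum_measureReal_pair hC.measurable (hC.ae_exists_eq 1),
    Finset.sum_eq_single n, (hC.measureReal_succ_pair (m := n) (by omega)).2]
  · intro j hj hj'
    have := Finset.mem_range.1 hj
    exact hC.measureReal_pair_eq_zero (by omega) (by omega) (by omega)
  · exact fun h => absurd (Finset.mem_range.2 (by omega)) h

lemma transProb_succ_up (hC : ConditionS P N ε Y) (m : ℕ) :
    transProb P Y (m + 1) 0 (m + 1) = transProb P Y m 0 m * transProb P Y 1 m (m + 1) := by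
  refine transProb_add_eq_mul hC.1 hC.2.1 ?_
  filter_upwards [hC.ae_abs_sub_le_one] with ω hω h₀ h₁
  have := eq_add_of_abs_succ_sub_le_one (f := fun k => Y k ω) hω (n := m)
    (by rw [h₀, h₁]; push_cast; ring)
  rw [this, h₀]
  push_cast; ring

lemma transProb_succ_down (hC : ConditionS P N ε Y) (d i : ℕ) :
    transProb P Y (d + 1) (i + 1 + d) i
      = transProb P Y d (i + 1 + d) (i + 1) * transProb P Y 1 (i + 1) i := by
  refine transProb_add_eq_mul hC.1 hC.2.1 ?_
  filter_upwards [hC.ae_abs_sub_le_one] with ω hω h₀ h₁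
  have := eq_sub_of_abs_succ_sub_le_one (f := fun k => Y k ω) hω (n := d)
    (by rw [h₀, h₁]; push_cast; ring)
  rw [this, h₀]
  push_cast; ring

lemma transProb_one_up (hC : ConditionS P N ε Y) {k : ℕ} (hk₀ : 1 ≤ k) (hkN : k < N) :
    transProb P Y 1 k (k + 1)
      = ε ^ condSExponent N (k + 1) / (ε ^ condSExponent N k + ε ^ condSExponent N (k + 1)) := by
  rw [transProb, ← measureReal_def, ← measureReal_def, hC.measureReal_of_pos_of_lt hk₀ hkN]
  simpa using congrArg (· / _) (hC.measureReal_succ_pair hkN).1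

lemma transProb_one_down (hC : ConditionS P N ε Y) {k : ℕ} (hk : k + 1 < N) :
    transProb P Y 1 (k + 1) k = ε ^ condSExponent N (k + 1)
      / (ε ^ condSExponent N (k + 1) + ε ^ condSExponent N (k + 2)) := by
  rw [transProb, ← measureReal_def, ← measureReal_def,
    hC.measureReal_of_pos_of_lt le_add_self hk]
  simpa using congrArg (· / _) (hC.measureReal_succ_pair (m := k) (by omega)).2

lemma transProb_one_last (hC : ConditionS P N ε Y) {k : ℕ} (hk : k + 1 = N) (hε : ε ≠ 0) :
    transProb P Y 1 (k + 1) k = 1 := by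
  rw [transProb, ← measureReal_def, ← measureReal_def, hk, hC.measureReal_last (by omega)]
  have := (hC.measureReal_succ_pair (m := k) (by omega)).2
  rw [hk] at this
  simp [this, hε]

end ConditionS

lemma tendsto_pow_div_pow_add_pow {a b : ℕ} (hab : a < b) :
    Tendsto (fun ε : ℝ => ε ^ a / (ε ^ a + ε ^ b)) (𝓝[>] 0) (𝓝 1) := by
  have hlim : Tendsto (fun ε : ℝ => 1 / (1 + ε ^ (b - a))) (𝓝 0) (𝓝 (1 / (1 + 0))) :=
    tendsto_const_nhds.div (tendsto_const_nhds.add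
      ((continuous_pow _).tendsto' 0 0 (zero_pow (by omega)))) (by norm_num)
  rw [add_zero, div_one] at hlim
  refine (hlim.mono_left nhdsWithin_le_nhds).congr' ?_
  filter_upwards [self_mem_nhdsWithin] with ε (hε : 0 < ε)
  rw [← Nat.add_sub_of_le hab.le, pow_add, Nat.add_sub_cancel_left]
  field_simp

lemma condSExponent_lt_succ {N k : ℕ} (hkN : k < N) :
    condSExponent N k < condSExponent N (k + 1) := by
  unfold condSExponent
  split_ifs <;> omega

section Limits

variable [MeasurableSpace Ω] {P : Measure Ω} [IsProbabilityMeasure P] {N : ℕ}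
  {Y : ℝ → ℤ → Ω → ℝ}

lemma tendsto_measureReal_zero (hN : 1 ≤ N) (hY : ∀ᶠ ε in 𝓝[>] 0, ConditionS P N ε (Y ε)) :
    Tendsto (fun ε => P.real {ω | Y ε 0 ω = 0}) (𝓝[>] 0) (𝓝 1) := by
  have hcont : Continuous fun ε : ℝ =>
      1 - 2 * (ε ^ (2 * N - 1) + ∑ u ∈ Finset.Icc 1 (N - 1), ε ^ (2 * u))
        + ε ^ condSExponent N 1 := by fun_prop
  have hexp : condSExponent N 1 ≠ 0 := by unfold condSExponent; split_ifs <;> omega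
  have h₀ := (hcont.tendsto 0).mono_left (nhdsWithin_le_nhds (s := Ioi 0))
  have hsum : ∑ u ∈ Finset.Icc 1 (N - 1), (0 : ℝ) ^ (2 * u) = 0 :=
    Finset.sum_eq_zero fun u hu => zero_pow (by simp at hu; omega)
  simp only [zero_pow (by omega : 2 * N - 1 ≠ 0), zero_pow hexp, hsum, mul_zero, add_zero,
    sub_zero] at h₀
  refine h₀.congr' ?_
  filter_upwards [hY] with ε hC
  exact (hC.measureReal_zero hN).symm

lemma eventually_pos_measureReal_zero (hN : 1 ≤ N)
    (hY : ∀ᶠ ε in 𝓝[>] 0, ConditionS P N ε (Y ε)) :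
    ∀ᶠ ε in 𝓝[>] 0, 0 < P.real {ω | Y ε 0 ω = 0} :=
  (tendsto_measureReal_zero hN hY).eventually_const_lt one_pos

lemma tendsto_transProb_up (hN : 1 ≤ N) (hY : ∀ᶠ ε in 𝓝[>] 0, ConditionS P N ε (Y ε))
    {m : ℕ} (hm : 1 ≤ m) (hmN : m ≤ N) :
    Tendsto (fun ε => transProb P (Y ε) m 0 m / ε ^ condSExponent N m) (𝓝[>] 0) (𝓝 1) := by
  induction m, hm using Nat.le_induction with
  | base =>
    have h := (tendsto_measureReal_zero hN hY).inv₀ one_ne_zero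
    rw [inv_one] at h
    refine h.congr' ?_
    filter_upwards [hY, self_mem_nhdsWithin] with ε hC (hε : 0 < ε)
    rw [hC.transProb_one_zero_one hN]
    field_simp
  | succ m hm ih =>
    have h := (ih (by omega)).mul (tendsto_pow_div_pow_add_pow (condSExponent_lt_succ hmN))
    rw [one_mul] at h
    refine h.congr' ?_
    filter_upwards [hY, self_mem_nhdsWithin] with ε hC (hε : 0 < ε)
    rw [hC.transProb_succ_up m, hC.transProb_one_up hm (by omega)]
    field_simp

lemma tendsto_transProb_one_down (hY : ∀ᶠ ε in 𝓝[>] 0, ConditionS P N ε (Y ε)) {k : ℕ}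
    (hk : k < N) : Tendsto (fun ε => transProb P (Y ε) 1 (k + 1) k) (𝓝[>] 0) (𝓝 1) := by
  rcases (Nat.succ_le_of_lt hk).lt_or_eq with hk | hk
  · refine (tendsto_pow_div_pow_add_pow
      (condSExponent_lt_succ hk)).congr' ?_
    filter_upwards [hY] with ε hC
    exact (hC.transProb_one_down hk).symm
  · refine tendsto_const_nhds.congr' ?_
    filter_upwards [hY, self_mem_nhdsWithin] with ε hC (hε : 0 < ε)
    exact (hC.transProb_one_last hk hε.ne').symm

lemma tendsto_transProb_down (hY : ∀ᶠ ε in 𝓝[>] 0, ConditionS P N ε (Y ε)) {d : ℕ}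
    (hd : 1 ≤ d) : ∀ i, i + d ≤ N →
      Tendsto (fun ε => transProb P (Y ε) d (i + d) i) (𝓝[>] 0) (𝓝 1) := by
  induction d, hd using Nat.le_induction with
  | base => exact fun i hi => tendsto_transProb_one_down hY (by omega)
  | succ d hd ih =>
    intro i hi
    have h := (ih (i + 1) (by omega)).mul (tendsto_transProb_one_down hY (k := i) (by omega))
    rw [one_mul] at h
    refine h.congr' ?_
    filter_upwards [hY] with ε hC
    rw [show i + (d + 1) = i + 1 + d by ring]
    exact (hC.transProb_succ_down d i).symm

lemma tendsto_transProb_zero_zero (hN : 1 ≤ N) (hY : ∀ᶠ ε in 𝓝[>] 0, ConditionS P N ε (Y ε))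
    (m : ℕ) : Tendsto (fun ε => transProb P (Y ε) m 0 0) (𝓝[>] 0) (𝓝 1) := by
  have hlow := tendsto_const_nhds (x := (2 : ℝ)).sub
    ((tendsto_measureReal_zero hN hY).inv₀ one_ne_zero)
  norm_num at hlow
  refine tendsto_of_tendsto_of_tendsto_of_le_of_le' hlow tendsto_const_nhds ?_
    (Eventually.of_forall fun ε => transProb_le_one m 0 0)
  filter_upwards [hY, eventually_pos_measureReal_zero hN hY] with ε hC hpos
  simpa using two_sub_inv_le_transProb_self hC.1 hC.measurable m 0 (by simpa using hpos)

lemma tendsto_transProb_to_zero (hN : 1 ≤ N) (hY : ∀ᶠ ε in 𝓝[>] 0, ConditionS P N ε (Y ε))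
    {j m : ℕ} (hj : 1 ≤ j) (hjN : j ≤ N) (hjm : j ≤ m) :
    Tendsto (fun ε => transProb P (Y ε) m j 0) (𝓝[>] 0) (𝓝 1) := by
  have hlow := (tendsto_transProb_down hY hj 0 (by omega)).mul
    (tendsto_transProb_zero_zero hN hY (m - j))
  rw [one_mul] at hlow
  refine tendsto_of_tendsto_of_tendsto_of_le_of_le' hlow tendsto_const_nhds ?_
    (Eventually.of_forall fun ε => transProb_le_one m j 0)
  filter_upwards [hY] with ε hC
  simpa [Nat.add_sub_cancel' hjm] using transProb_mul_transProb_le hC.1 hC.2.1 j (m - j) j 0 0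

end Limits

/-- Asymptotics (2.6) of the multi-step transition probabilities. -/
theorem conditionS_multistep_asymptotics [MeasurableSpace Ω] (P : Measure Ω)
    [IsProbabilityMeasure P] (N : ℕ) (hN : 3 ≤ N) (Y : ℝ → ℤ → Ω → ℝ)
    (hY : ∀ ε ∈ Set.Ioc (0:ℝ) (1/3), ConditionS P N ε (Y ε)) :
    (∀ m : ℕ, 1 ≤ m →
      Tendsto (fun ε : ℝ => transProb P (Y ε) m 0 0) (𝓝[>] 0) (𝓝 1)) ∧
    (∀ m : ℕ, 1 ≤ m → m ≤ N - 1 →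
      Tendsto (fun ε : ℝ => transProb P (Y ε) m 0 m / ε^(2*m)) (𝓝[>] 0) (𝓝 1)) ∧
    Tendsto (fun ε : ℝ => transProb P (Y ε) N 0 N / ε^(2*N-1)) (𝓝[>] 0) (𝓝 1) ∧
    (∀ i j : ℕ, i < j → j ≤ N →
      Tendsto (fun ε : ℝ => transProb P (Y ε) (j-i) j i) (𝓝[>] 0) (𝓝 1)) ∧
    (∀ j m : ℕ, 1 ≤ j → j ≤ N → j ≤ m →
      Tendsto (fun ε : ℝ => transProb P (Y ε) m j 0) (𝓝[>] 0) (𝓝 1)) := by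
  have hN₁ : 1 ≤ N := by omega
  have hY' : ∀ᶠ ε in 𝓝[>] 0, ConditionS P N ε (Y ε) := by
    filter_upwards [Ioc_mem_nhdsGT (by norm_num : (0 : ℝ) < 1 / 3)] with ε hε using hY ε hε
  refine ⟨fun m _ => tendsto_transProb_zero_zero hN₁ hY' m, fun m hm hmN => ?_, ?_,
    fun i j hij hjN => ?_, fun j m hj hjN hjm => tendsto_transProb_to_zero hN₁ hY' hj hjN hjm⟩
  · simpa [condSExponent, show m < N by omega] using tendsto_transProb_up hN₁ hY' hm (by omega)
  · simpa [condSExponent] using tendsto_transProb_up hN₁ hY' hN₁ le_rfl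
  · simpa [Nat.add_sub_cancel' hij.le] using
      tendsto_transProb_down hY' (d := j - i) (by omega) i (by omega)

end
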